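/- Let n be a positive integer and let X be an S(2n)-space. Then |X| ≤ 2^{sL_{θ(n)}(X) · κ_{θ(n)}(X)}, where the exponent is the (cardinal) product of the two cardinal invariants. -/

import Mathlib

open Cardinal Set

universe u

/-- The θⁿ-closure: `x ∈ thetaCl n M` iff there is NO chain of open sets
`U 0 ⊆ U 1 ⊆ ... ⊆ U (n-1)` with `x ∈ U 0`, `closure (U i) ⊆ U (i+1)` for `i+1 < n`,
and `closure (U (n-1)) ∩ M = ∅`. -/
def thetaCl (n : ℕ) {X : Type u} [TopologicalSpace X] (M : Set X) : Set X :=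
  {x | ¬ ∃ U : ℕ → Set X, (∀ i, i < n → IsOpen (U i)) ∧ x ∈ U 0 ∧
    (∀ i, i + 1 < n → closure (U i) ⊆ U (i + 1)) ∧
    closure (U (n - 1)) ∩ M = ∅}

/-- The θ₀ⁿ-closure: as `thetaCl` but the last set itself misses `M`. -/
def theta0Cl (n : ℕ) {X : Type u} [TopologicalSpace X] (M : Set X) : Set X :=
  {x | ¬ ∃ U : ℕ → Set X, (∀ i, i < n → IsOpen (U i)) ∧ x ∈ U 0 ∧
    (∀ i, i + 1 < n → closure (U i) ⊆ U (i + 1)) ∧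
    U (n - 1) ∩ M = ∅}

/-- `X` is an S(m)-space: any two distinct points are S(m)-separated. -/
def SSpace (m : ℕ) (X : Type u) [TopologicalSpace X] : Prop :=
  ∀ x y : X, x ≠ y → x ∉ thetaCl m ({y} : Set X)

/-- `U` is an n-hull of `A`: there are open sets `V 0, ..., V (n-1) = U` with
`A ⊆ V 0` and `closure (V i) ⊆ V (i+1)` for `i+1 < n`. -/
def IsNHull (n : ℕ) {X : Type u} [TopologicalSpace X] (A U : Set X) : Prop :=
  ∃ V : ℕ → Set X, (∀ i, i < n → IsOpen (V i)) ∧ A ⊆ V 0 ∧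
    (∀ i, i + 1 < n → closure (V i) ⊆ V (i + 1)) ∧ U = V (n - 1)

/-- A closed n-hull of `A` is the closure of an n-hull of `A`. -/
def IsClosedNHull (n : ℕ) {X : Type u} [TopologicalSpace X] (A W : Set X) : Prop :=
  ∃ U : Set X, IsNHull n A U ∧ W = closure U

/-- `κ_{θ(n)}(X)`: the smallest infinite cardinal `κ` such that every point `x` has a
family of at most `κ` closed n-hulls of `{x}` which is cofinal (under `⊇`) in all
closed n-hulls of `{x}`. -/
noncomputable def kappaTheta (n : ℕ) (X : Type u) [TopologicalSpace X] : Cardinal.{u} :=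
  sInf {κ : Cardinal.{u} | Cardinal.aleph0 ≤ κ ∧ ∀ x : X, ∃ 𝒱 : Set (Set X),
    #𝒱 ≤ κ ∧ (∀ W ∈ 𝒱, IsClosedNHull n ({x} : Set X) W) ∧
    ∀ W : Set X, IsClosedNHull n ({x} : Set X) W → ∃ B ∈ 𝒱, B ⊆ W}

/-- `κ_{θ₀(n)}(X)`: as `kappaTheta` but with (open) n-hulls of `{x}`. -/
noncomputable def kappaTheta0 (n : ℕ) (X : Type u) [TopologicalSpace X] : Cardinal.{u} :=
  sInf {κ : Cardinal.{u} | Cardinal.aleph0 ≤ κ ∧ ∀ x : X, ∃ 𝒱 : Set (Set X),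
    #𝒱 ≤ κ ∧ (∀ W ∈ 𝒱, IsNHull n ({x} : Set X) W) ∧
    ∀ W : Set X, IsNHull n ({x} : Set X) W → ∃ B ∈ 𝒱, B ⊆ W}

/-- `sL_{θ(n)}(X)`: the smallest infinite cardinal `κ` such that for every `A ⊆ X` and
every family `𝒰` of open sets with `thetaCl n A ⊆ ⋃₀ 𝒰` there is `𝒱 ⊆ 𝒰` with
`#𝒱 ≤ κ` and `A ⊆ closure (⋃₀ 𝒱)`. -/
noncomputable def sLTheta (n : ℕ) (X : Type u) [TopologicalSpace X] : Cardinal.{u} :=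
  sInf {κ : Cardinal.{u} | Cardinal.aleph0 ≤ κ ∧ ∀ (A : Set X) (𝒰 : Set (Set X)),
    (∀ U ∈ 𝒰, IsOpen U) → thetaCl n A ⊆ ⋃₀ 𝒰 →
    ∃ 𝒱 ⊆ 𝒰, #𝒱 ≤ κ ∧ A ⊆ closure (⋃₀ 𝒱)}

/-- `sL_{θ₀(n)}(X)`: the smallest infinite cardinal `κ` such that for every θ₀ⁿ-closed
`A ⊆ X` and every family `𝒰` of open sets covering `A` there is `𝒱 ⊆ 𝒰` with
`#𝒱 ≤ κ` and `A ⊆ closure (⋃₀ 𝒱)`. -/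
noncomputable def sLTheta0 (n : ℕ) (X : Type u) [TopologicalSpace X] : Cardinal.{u} :=
  sInf {κ : Cardinal.{u} | Cardinal.aleph0 ≤ κ ∧ ∀ (A : Set X) (𝒰 : Set (Set X)),
    theta0Cl n A = A → (∀ U ∈ 𝒰, IsOpen U) → A ⊆ ⋃₀ 𝒰 →
    ∃ 𝒱 ⊆ 𝒰, #𝒱 ≤ κ ∧ A ⊆ closure (⋃₀ 𝒱)}

/-- `sL_{s(n)}(X)`: the smallest infinite cardinal `κ` such that for every θⁿ-closed
`A ⊆ X` and every S(n)-cover `𝒰` with respect to `A` (i.e. `A` is covered by the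
θⁿ-interiors of members of `𝒰`) there is `𝒱 ⊆ 𝒰` with `#𝒱 ≤ κ` and
`A ⊆ closure (⋃₀ 𝒱)`. -/
noncomputable def sLs (n : ℕ) (X : Type u) [TopologicalSpace X] : Cardinal.{u} :=
  sInf {κ : Cardinal.{u} | Cardinal.aleph0 ≤ κ ∧ ∀ (A : Set X) (𝒰 : Set (Set X)),
    thetaCl n A = A → (∀ U ∈ 𝒰, IsOpen U) →
    (A ⊆ ⋃ U ∈ 𝒰, (thetaCl n Uᶜ)ᶜ) →
    ∃ 𝒱 ⊆ 𝒰, #𝒱 ≤ κ ∧ A ⊆ closure (⋃₀ 𝒱)}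

/-- `qM_{θ(n)}(X)`: the θ(n)-quasi-Menger number. -/
noncomputable def qMTheta (n : ℕ) (X : Type u) [TopologicalSpace X] : Cardinal.{u} :=
  sInf {κ : Cardinal.{u} | Cardinal.aleph0 ≤ κ ∧ ∀ A : Set X, IsClosed A →
    ∀ 𝒰 : κ.out → Set (Set X), (∀ α, ∀ U ∈ 𝒰 α, IsOpen U) →
    A ⊆ ⋃ α, ⋃₀ (𝒰 α) →
    ∃ 𝒱 : κ.out → Set (Set X), (∀ α, 𝒱 α ⊆ 𝒰 α ∧ (𝒱 α).Finite) ∧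
      A ⊆ ⋃ α, thetaCl n (⋃₀ (𝒱 α))}

/-- `qM_{θ₀(n)}(X)`: the θ₀(n)-quasi-Menger number. -/
noncomputable def qMTheta0 (n : ℕ) (X : Type u) [TopologicalSpace X] : Cardinal.{u} :=
  sInf {κ : Cardinal.{u} | Cardinal.aleph0 ≤ κ ∧ ∀ A : Set X, IsClosed A →
    ∀ 𝒰 : κ.out → Set (Set X), (∀ α, ∀ U ∈ 𝒰 α, IsOpen U) →
    A ⊆ ⋃ α, ⋃₀ (𝒰 α) →
    ∃ 𝒱 : κ.out → Set (Set X), (∀ α, 𝒱 α ⊆ 𝒰 α ∧ (𝒱 α).Finite) ∧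
      A ⊆ ⋃ α, theta0Cl n (⋃₀ (𝒱 α))}

/-!
A Pol–Šapirovskii closing-off argument. Put `κ = sL_{θ(n)}(X) · κ_{θ(n)}(X)` and fix at
every point `κ` many n-hulls whose closures are cofinal among its closed n-hulls. In an
S(2n)-space distinct points have disjoint closed n-hulls, so a point of `cl_{θⁿ}(B)` is determined
by points of `B` picked in its basic closed hulls together with the inclusion pattern of those
hulls; hence `|cl_{θⁿ}(B)| ≤ |B|^κ · 2^κ`. Closing off then gives a set `A` with `|A| ≤ 2^κ` that is
θⁿ-closed and, for every family `𝒲` of at most `κ` basic hulls of points of `A`, has a point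
outside `cl(⋃ 𝒲)` whenever `X` does. If some `z ∉ A`, a chain around `z` missing `A` gives every
point of `A` a basic hull whose closure misses a neighbourhood of `z`; `sL_{θ(n)}` selects `κ` of
them with union dense in `A`, contradicting the choice of `A`.
-/

theorem Cardinal.mk_Iio_le_of_toType_succ_ord {κ : Cardinal.{u}}
    (t : (Order.succ κ).ord.ToType) : #(Iio t) ≤ κ :=
  Order.lt_succ_iff.mp (by simpa using mk_Iio_lt t (by simp))

theorem Cardinal.exists_gt_of_toType_succ_ord {κ : Cardinal.{u}} (hκ : ℵ₀ ≤ κ)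
    (s : Set (Order.succ κ).ord.ToType) (hs : #s ≤ κ) : ∃ t, ∀ a ∈ s, a < t := by
  by_contra! hs_cofinal
  have hcof : Order.cof (Order.succ κ).ord.ToType ≤ #s := Order.cof_le hs_cofinal
  rw [Ordinal.cof_toType, (isRegular_succ hκ).cof_ord] at hcof
  exact (Order.lt_succ_of_not_isMax (not_isMax κ)).not_ge (hcof.trans hs)

/- Iterate `B ↦ ⋃ {g S | S ⊆ B, #S ≤ κ}` along the regular cardinal `κ⁺`: a subset of size `κ`
of the union has bounded stages, so it already lies below some stage. -/
theorem Cardinal.exists_closedUnder_card_le {X : Type u} {κ : Cardinal.{u}}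
    (hκ : ℵ₀ ≤ κ) (g : Set X → Set X) (hg : ∀ S : Set X, #S ≤ κ → #(g S) ≤ 2 ^ κ) :
    ∃ A : Set X, #A ≤ 2 ^ κ ∧ ∀ S ⊆ A, #S ≤ κ → g S ⊆ A := by
  have h2κ : ℵ₀ ≤ 2 ^ κ := hκ.trans (cantor κ).le
  have card_step (B : Set X) (hB : #B ≤ 2 ^ κ) :
      #(⋃ S : {S : Set X // S ⊆ B ∧ #S ≤ κ}, g S) ≤ 2 ^ κ := calc
    _ ≤ #{S : Set X // S ⊆ B ∧ #S ≤ κ} * 2 ^ κ :=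
      (mk_iUnion_le _).trans (mul_le_mul_right (ciSup_le' fun S => hg S.1 S.2.2) _)
    _ ≤ (2 ^ κ) ^ κ * 2 ^ κ :=
      mul_le_mul_left ((mk_bounded_subset_le B κ).trans (power_le_power_right (max_le hB h2κ))) _
    _ = 2 ^ κ := by rw [← power_mul, mul_eq_self hκ, mul_eq_self h2κ]
  obtain ⟨stage, stage_eq⟩ : ∃ stage : (Order.succ κ).ord.ToType → Set X, ∀ t,
      stage t = ⋃ S : {S : Set X // S ⊆ ⋃ s : Iio t, stage s ∧ #S ≤ κ}, g S :=
    ⟨_, wellFounded_lt.fix_eq (C := fun _ => Set X) fun t stage =>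
      ⋃ S : {S : Set X // S ⊆ ⋃ s : Iio t, stage s.1 s.2 ∧ #S ≤ κ}, g S.1⟩
  have card_stage (t) : #(stage t) ≤ 2 ^ κ := by
    induction t using WellFoundedLT.induction with | _ t ih
    rw [stage_eq]
    refine card_step _ ((mk_iUnion_le _).trans ?_)
    calc #(Iio t) * ⨆ s : Iio t, #(stage s) ≤ κ * 2 ^ κ :=
          mul_le_mul' (mk_Iio_le_of_toType_succ_ord t) (ciSup_le' fun s => ih s s.2)
      _ ≤ 2 ^ κ := mul_le_of_le h2κ (cantor κ).le le_rfl
  refine ⟨⋃ t, stage t, ?_, fun S hS hSκ => ?_⟩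
  · calc #(⋃ t, stage t) ≤ #(Order.succ κ).ord.ToType * 2 ^ κ :=
          (mk_iUnion_le _).trans (mul_le_mul_right (ciSup_le' card_stage) _)
      _ ≤ 2 ^ κ := by
        rw [mk_ord_toType]
        exact mul_le_of_le h2κ (Order.succ_le_of_lt (cantor κ)) le_rfl
  · choose t ht using fun x : S => mem_iUnion.1 (hS x.2)
    obtain ⟨T, hT⟩ := exists_gt_of_toType_succ_ord hκ (range t) (mk_range_le.trans hSκ)
    have hST : S ⊆ ⋃ s : Iio T, stage s := fun x hx =>
      mem_iUnion.2 ⟨⟨t ⟨x, hx⟩, hT _ (mem_range_self _)⟩, ht _⟩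
    refine subset_iUnion_of_subset T ?_
    rw [stage_eq]
    exact subset_iUnion_of_subset ⟨S, hST, hSκ⟩ subset_rfl

section Chains

variable {X : Type u} [TopologicalSpace X]

theorem IsOpen.closure_compl_closure_subset {s : Set X} (hs : IsOpen s) :
    closure (closure s)ᶜ ⊆ sᶜ := by
  rw [closure_compl]
  exact compl_subset_compl.2 hs.subset_interior_closure

def IsOpenChain (n : ℕ) (U : ℕ → Set X) : Prop :=
  (∀ i, i < n → IsOpen (U i)) ∧ ∀ i, i + 1 < n → closure (U i) ⊆ U (i + 1)

namespace IsOpenChain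

variable {n k : ℕ} {U : ℕ → Set X}

theorem mono (hU : IsOpenChain n U) {i j : ℕ} (hij : i ≤ j) (hj : j < n) : U i ⊆ U j := by
  induction j, hij using Nat.le_induction with
  | base => rfl
  | succ j _ ih => exact (ih (by omega)).trans (subset_closure.trans (hU.2 j hj))

theorem of_le (hU : IsOpenChain k U) (h : n ≤ k) : IsOpenChain n U :=
  ⟨fun i hi => hU.1 i (by omega), fun i hi => hU.2 i (by omega)⟩

theorem isClosedNHull (hU : IsOpenChain n U) {A : Set X} (hA : A ⊆ U 0) :
    IsClosedNHull n A (closure (U (n - 1))) :=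
  ⟨_, ⟨U, hU.1, hA, hU.2, rfl⟩, rfl⟩

theorem compl_closure_rev (hU : IsOpenChain n U) :
    IsOpenChain n fun i => (closure (U (n - 1 - i)))ᶜ := by
  refine ⟨fun i _ => isClosed_closure.isOpen_compl, fun i hi => ?_⟩
  refine ((hU.1 _ (by omega)).closure_compl_closure_subset).trans (compl_subset_compl.2 ?_)
  have : n - 1 - i = n - 1 - (i + 1) + 1 := by omega
  rw [this]
  exact hU.2 _ (by omega)

theorem exists_closedNHull_disjoint (hU : IsOpenChain k U) (hn : 0 < n) (hnk : n ≤ k) {y : X}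
    (hy : y ∉ closure (U (k - 1))) :
    ∃ D, IsClosedNHull n {y} D ∧ Disjoint D (U (k - n)) := by
  refine ⟨_, (hU.compl_closure_rev.of_le hnk).isClosedNHull (by simpa using hy), ?_⟩
  have : k - 1 - (n - 1) = k - n := by omega
  rw [this, ← subset_compl_iff_disjoint_right]
  exact (hU.1 _ (by omega)).closure_compl_closure_subset

end IsOpenChain

variable {n : ℕ} {A U U' M : Set X} {x y : X}

theorem notMem_thetaCl_iff :
    x ∉ thetaCl n M ↔ ∃ U, IsOpenChain n U ∧ x ∈ U 0 ∧ Disjoint (closure (U (n - 1))) M := by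
  simp only [thetaCl, mem_ofPred_eq, not_not, disjoint_iff_inter_eq_empty]
  exact ⟨fun ⟨U, hUo, hx, hUl, hUM⟩ => ⟨U, ⟨hUo, hUl⟩, hx, hUM⟩,
    fun ⟨U, ⟨hUo, hUl⟩, hx, hUM⟩ => ⟨U, hUo, hx, hUl, hUM⟩⟩

theorem notMem_thetaCl_iff_exists_closedNHull :
    x ∉ thetaCl n M ↔ ∃ W, IsClosedNHull n {x} W ∧ Disjoint W M := by
  rw [notMem_thetaCl_iff]
  constructor
  · rintro ⟨U, hU, hx, hUM⟩
    exact ⟨_, hU.isClosedNHull (singleton_subset_iff.2 hx), hUM⟩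
  · rintro ⟨_, ⟨_, ⟨U, hUo, hx, hUl, rfl⟩, rfl⟩, hUM⟩
    exact ⟨U, ⟨hUo, hUl⟩, hx rfl, hUM⟩

theorem IsNHull.subset (h : IsNHull n A U) : A ⊆ U := by
  obtain ⟨V, hVo, hA, hVl, rfl⟩ := h
  rcases n.eq_zero_or_pos with rfl | hn
  · exact hA
  · exact hA.trans (IsOpenChain.mono ⟨hVo, hVl⟩ (Nat.zero_le _) (by omega))

theorem IsNHull.isOpen (h : IsNHull n A U) (hn : 0 < n) : IsOpen U := by
  obtain ⟨V, hVo, -, -, rfl⟩ := h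
  exact hVo _ (by omega)

theorem IsNHull.inter (h : IsNHull n A U) (h' : IsNHull n A U') : IsNHull n A (U ∩ U') := by
  obtain ⟨V, hVo, hA, hVl, rfl⟩ := h
  obtain ⟨V', hV'o, hA', hV'l, rfl⟩ := h'
  exact ⟨fun i => V i ∩ V' i, fun i hi => (hVo i hi).inter (hV'o i hi), subset_inter hA hA',
    fun i hi => (closure_inter_subset_inter_closure _ _).trans
      (inter_subset_inter (hVl i hi) (hV'l i hi)), rfl⟩

theorem IsClosedNHull.subset {W : Set X} (h : IsClosedNHull n A W) : A ⊆ W := by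
  obtain ⟨U, hU, rfl⟩ := h
  exact hU.subset.trans subset_closure

theorem subset_thetaCl (A : Set X) : A ⊆ thetaCl n A := fun x hx => by
  by_contra hx'
  obtain ⟨W, hW, hWA⟩ := notMem_thetaCl_iff_exists_closedNHull.1 hx'
  exact hWA.ne_of_mem (hW.subset rfl) hx rfl

theorem SSpace.exists_disjoint_closedNHull (hX : SSpace (2 * n) X) (hn : 0 < n) (hxy : x ≠ y) :
    ∃ C D, IsClosedNHull n {x} C ∧ IsClosedNHull n {y} D ∧ Disjoint C D := by
  obtain ⟨U, hU, hxU, hUy⟩ := notMem_thetaCl_iff.1 (hX x y hxy)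
  obtain ⟨D, hD, hDU⟩ :=
    hU.exists_closedNHull_disjoint hn (by omega) (disjoint_singleton_right.1 hUy)
  refine ⟨_, D, (hU.of_le (by omega)).isClosedNHull (singleton_subset_iff.2 hxU), hD, ?_⟩
  have hC : closure (U (n - 1)) ⊆ U n := by
    simpa [Nat.sub_add_cancel hn] using hU.2 (n - 1) (by omega)
  rw [show 2 * n - n = n by omega] at hDU
  exact hDU.symm.mono_left hC

end Chains

theorem sLTheta_spec (n : ℕ) (X : Type u) [TopologicalSpace X] :
    ℵ₀ ≤ sLTheta n X ∧ ∀ (A : Set X) (𝒰 : Set (Set X)), (∀ U ∈ 𝒰, IsOpen U) →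
      thetaCl n A ⊆ ⋃₀ 𝒰 → ∃ 𝒱 ⊆ 𝒰, #𝒱 ≤ sLTheta n X ∧ A ⊆ closure (⋃₀ 𝒱) :=
  (csInf_mem ⟨max ℵ₀ (2 ^ #X), le_max_left _ _, fun A 𝒰 _ h𝒰 =>
    ⟨𝒰, subset_rfl, (mk_set_le 𝒰).trans (mk_set.trans_le (le_max_right _ _)),
      ((subset_thetaCl A).trans h𝒰).trans subset_closure⟩⟩ : sLTheta n X ∈ _)

theorem kappaTheta_spec (n : ℕ) (X : Type u) [TopologicalSpace X] :
    ℵ₀ ≤ kappaTheta n X ∧ ∀ x : X, ∃ 𝒱 : Set (Set X), #𝒱 ≤ kappaTheta n X ∧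
      (∀ W ∈ 𝒱, IsClosedNHull n {x} W) ∧ ∀ W, IsClosedNHull n {x} W → ∃ B ∈ 𝒱, B ⊆ W :=
  (csInf_mem ⟨max ℵ₀ (2 ^ #X), le_max_left _ _, fun x =>
    ⟨{W | IsClosedNHull n {x} W}, (mk_set_le _).trans (mk_set.trans_le (le_max_right _ _)),
      fun _ hW => hW, fun W hW => ⟨W, hW, subset_rfl⟩⟩⟩ : kappaTheta n X ∈ _)

section Base

variable {X : Type u} [TopologicalSpace X] {ι : Type u}

/- The closures `closure (h x i)` play the role of the cofinal family `𝒱ₓ` in `κ_{θ(n)}(X)`. -/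
def IsNHullBase (n : ℕ) (h : X → ι → Set X) : Prop :=
  (∀ x i, IsNHull n {x} (h x i)) ∧ ∀ x W, IsClosedNHull n {x} W → ∃ i, closure (h x i) ⊆ W

variable {n : ℕ}

theorem exists_isNHullBase (hι : kappaTheta n X ≤ #ι) : ∃ h : X → ι → Set X, IsNHullBase n h := by
  suffices ∀ x : X, ∃ hx : ι → Set X, (∀ i, IsNHull n {x} (hx i)) ∧
      ∀ W, IsClosedNHull n {x} W → ∃ i, closure (hx i) ⊆ W by
    choose h hh hcof using this
    exact ⟨h, hh, hcof⟩
  intro x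
  obtain ⟨𝒱, h𝒱, h𝒱x, hcof⟩ := (kappaTheta_spec n X).2 x
  obtain ⟨W₀, hW₀, -⟩ := hcof _ (IsOpenChain.isClosedNHull (n := n) (U := fun _ => univ)
    ⟨fun _ _ => isOpen_univ, fun _ _ => subset_univ _⟩ (subset_univ {x}))
  have : Nonempty 𝒱 := ⟨⟨W₀, hW₀⟩⟩
  obtain ⟨e, he⟩ := Function.exists_surjective_iff.2 ⟨inferInstance, h𝒱.trans hι⟩
  choose U hU hUe using fun i => h𝒱x _ (e i).2
  refine ⟨U, hU, fun W hW => ?_⟩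
  obtain ⟨B, hB, hBW⟩ := hcof W hW
  obtain ⟨i, hi⟩ := he ⟨B, hB⟩
  refine ⟨i, ?_⟩
  rwa [← hUe i, hi]

variable {h : X → ι → Set X}

namespace IsNHullBase

theorem notMem_thetaCl_iff (hb : IsNHullBase n h) {x : X} {M : Set X} :
    x ∉ thetaCl n M ↔ ∃ i, Disjoint (closure (h x i)) M := by
  rw [notMem_thetaCl_iff_exists_closedNHull]
  refine ⟨fun ⟨W, hW, hWM⟩ => ?_, fun ⟨i, hi⟩ => ⟨_, ⟨_, hb.1 x i, rfl⟩, hi⟩⟩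
  obtain ⟨i, hi⟩ := hb.2 x W hW
  exact ⟨i, hWM.mono_left hi⟩

theorem exists_closure_subset_inter (hb : IsNHullBase n h) (x : X) (i j : ι) :
    ∃ k, closure (h x k) ⊆ closure (h x i) ∩ closure (h x j) := by
  obtain ⟨k, hk⟩ := hb.2 x _ ⟨_, (hb.1 x i).inter (hb.1 x j), rfl⟩
  exact ⟨k, hk.trans (closure_inter_subset_inter_closure _ _)⟩

theorem exists_disjoint_closure (hb : IsNHullBase n h) (hn : 0 < n) (hX : SSpace (2 * n) X)
    {x y : X} (hxy : x ≠ y) : ∃ i j, Disjoint (closure (h x i)) (closure (h y j)) := by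
  obtain ⟨C, D, hC, hD, hCD⟩ := hX.exists_disjoint_closedNHull hn hxy
  obtain ⟨i, hi⟩ := hb.2 x C hC
  obtain ⟨j, hj⟩ := hb.2 y D hD
  exact ⟨i, j, hCD.mono hi hj⟩

theorem exists_subset_card_le_of_mem_thetaCl (hb : IsNHullBase n h) {A : Set X} {z : X}
    (hz : z ∈ thetaCl n A) : ∃ S ⊆ A, #S ≤ #ι ∧ z ∈ thetaCl n S := by
  have hmeet (i : ι) : ∃ a ∈ A, a ∈ closure (h z i) := by
    by_contra! hdisj
    exact hb.notMem_thetaCl_iff.2 ⟨i, disjoint_right.2 hdisj⟩ hz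
  choose a haA ha using hmeet
  refine ⟨range a, range_subset_iff.2 haA, mk_range_le, ?_⟩
  by_contra hz'
  obtain ⟨i, hi⟩ := hb.notMem_thetaCl_iff.1 hz'
  exact hi.ne_of_mem (ha i) (mem_range_self i) rfl

/- A point `z` of the θⁿ-closure of `B` is coded by a choice of points `f z i ∈ B` in the closed
hulls of `z`, together with the inclusion pattern of those hulls; S(2n) makes the code injective. -/
theorem card_thetaCl_le [Infinite ι] (hb : IsNHullBase n h) (hn : 0 < n) (hX : SSpace (2 * n) X)
    (B : Set X) : #(thetaCl n B) ≤ #B ^ #ι * 2 ^ #ι := by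
  have hpt (z : thetaCl n B) (i : ι) : ∃ b : B, b.1 ∈ closure (h z i) := by
    by_contra! hdisj
    exact hb.notMem_thetaCl_iff.2 ⟨i, disjoint_right.2 fun b hbB => hdisj ⟨b, hbB⟩⟩ z.2
  choose f hf using hpt
  have hinj : Function.Injective fun z =>
      (f z, {p : ι × ι | closure (h z p.2) ⊆ closure (h z p.1)}) := by
    intro z z' hzz'
    obtain ⟨hff', hR⟩ := Prod.mk.inj hzz'
    by_contra hne
    obtain ⟨i, j, hij⟩ := hb.exists_disjoint_closure hn hX (Subtype.coe_ne_coe.2 hne)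
    obtain ⟨k, hk⟩ := hb.exists_closure_subset_inter z i j
    have hjk : (j, k) ∈ {p : ι × ι | closure (h z' p.2) ⊆ closure (h z' p.1)} :=
      hR ▸ hk.trans inter_subset_right
    exact hij.ne_of_mem (hk.trans inter_subset_left (hf z k)) (hjk (hf z' k))
      (congrArg (fun g => (g k).1) hff')
  calc #(thetaCl n B) ≤ #((ι → B) × Set (ι × ι)) := mk_le_of_injective hinj
    _ = #B ^ #ι * 2 ^ #ι := by
      rw [mk_prod, lift_id, lift_id, ← power_def, mk_set, mk_prod, lift_id,
        mul_eq_self (infinite_iff.1 ‹_›)]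

theorem eq_univ_of_thetaCl_subset (hb : IsNHullBase n h) (hn : 0 < n) (hsL : sLTheta n X ≤ #ι)
    {A : Set X} (hθ : thetaCl n A ⊆ A)
    (hA : ∀ S ⊆ A, #S ≤ #ι → ∀ 𝒲 ⊆ ⋃ x ∈ S, range (h x),
      (closure (⋃₀ 𝒲))ᶜ.Nonempty → ¬ A ⊆ closure (⋃₀ 𝒲)) :
    A = Set.univ := by
  refine eq_univ_of_forall fun z => by_contra fun hz => ?_
  obtain ⟨L, hL, hzL, hLA⟩ := _root_.notMem_thetaCl_iff.1 fun hz' => hz (hθ hz')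
  have hsep (y : X) (hy : y ∈ A) : ∃ i, Disjoint (closure (h y i)) (L 0) := by
    obtain ⟨D, hD, hDL⟩ := hL.exists_closedNHull_disjoint hn le_rfl (hLA.notMem_of_mem_right hy)
    obtain ⟨i, hi⟩ := hb.2 y D hD
    exact ⟨i, by simpa using hDL.mono_left hi⟩
  have : Nonempty ι := mk_ne_zero_iff.1 (aleph0_pos.trans_le ((sLTheta_spec n X).1.trans hsL)).ne'
  choose! i hi using hsep
  obtain ⟨𝒱, h𝒱, h𝒱ι, hA𝒱⟩ := (sLTheta_spec n X).2 A ((fun y => h y (i y)) '' A)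
    (forall_mem_image.2 fun y _ => (hb.1 y (i y)).isOpen hn)
    (hθ.trans fun y hy => mem_sUnion_of_mem ((hb.1 y (i y)).subset rfl) (mem_image_of_mem _ hy))
  have hz𝒱 : z ∉ closure (⋃₀ 𝒱) := by
    refine (Disjoint.closure_left ?_ (hL.1 0 hn)).notMem_of_mem_right hzL
    refine disjoint_sUnion_left.2 fun V hV => ?_
    obtain ⟨y, hy, rfl⟩ := h𝒱 hV
    exact (hi y hy).mono_left subset_closure
  choose y hyA hyV using fun V : 𝒱 => h𝒱 V.2
  refine hA (range y) (range_subset_iff.2 hyA) (mk_range_le.trans (h𝒱ι.trans hsL)) 𝒱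
    (fun V hV => mem_biUnion (mem_range_self ⟨V, hV⟩) ⟨_, hyV ⟨V, hV⟩⟩) ⟨z, hz𝒱⟩ hA𝒱

theorem exists_thetaCl_subset_card_le [Nonempty X] [Infinite ι] (hb : IsNHullBase n h)
    (hn : 0 < n) (hX : SSpace (2 * n) X) :
    ∃ A : Set X, #A ≤ 2 ^ #ι ∧ thetaCl n A ⊆ A ∧ ∀ S ⊆ A, #S ≤ #ι →
      ∀ 𝒲 ⊆ ⋃ x ∈ S, range (h x), (closure (⋃₀ 𝒲))ᶜ.Nonempty → ¬ A ⊆ closure (⋃₀ 𝒲) := by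
  have hι : ℵ₀ ≤ #ι := infinite_iff.1 ‹_›
  have h2ι : ℵ₀ ≤ 2 ^ #ι := hι.trans (cantor _).le
  let sel (𝒲 : Set (Set X)) : X := Classical.epsilon (· ∉ closure (⋃₀ 𝒲))
  obtain ⟨A, hAι, hA⟩ := exists_closedUnder_card_le hι
    (fun S => thetaCl n S ∪ sel '' 𝒫 (⋃ x ∈ S, range (h x))) fun S hS => by
      have hT : #(⋃ x ∈ S, range (h x)) ≤ #ι :=
        (mk_biUnion_le _ _).trans (mul_le_of_le hι hS (ciSup_le' fun _ => mk_range_le))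
      calc _ ≤ #S ^ #ι * 2 ^ #ι + 2 ^ #ι := (mk_union_le _ _).trans <| add_le_add
            (hb.card_thetaCl_le hn hX S) (mk_image_le.trans_eq (mk_powerset _) |>.trans
              (power_le_power_left two_ne_zero hT))
        _ ≤ #ι ^ #ι * 2 ^ #ι + 2 ^ #ι := by gcongr; exact power_le_power_right hS
        _ = 2 ^ #ι := by rw [power_self_eq hι, mul_eq_self h2ι, add_eq_self h2ι]
  refine ⟨A, hAι, fun z hz => ?_, fun S hSA hS 𝒲 h𝒲 hne hA𝒲 => ?_⟩
  · obtain ⟨S, hSA, hS, hzS⟩ := hb.exists_subset_card_le_of_mem_thetaCl hz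
    exact hA S hSA hS (Or.inl hzS)
  · exact Classical.epsilon_spec hne (hA𝒲 (hA S hSA hS (Or.inr ⟨𝒲, h𝒲, rfl⟩)))

end IsNHullBase

end Base

theorem stmt1 (n : ℕ) (hn : 0 < n) (X : Type u) [TopologicalSpace X]
    (hX : SSpace (2 * n) X) :
    #X ≤ 2 ^ (sLTheta n X * kappaTheta n X) := by
  rcases isEmpty_or_nonempty X with _ | _
  · simp
  set κ := sLTheta n X * kappaTheta n X
  have hsL : sLTheta n X ≤ κ := le_mul_right (aleph0_pos.trans_le (kappaTheta_spec n X).1).ne'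
  have hκ : ℵ₀ ≤ κ := (sLTheta_spec n X).1.trans hsL
  have : Infinite κ.out := infinite_iff.2 (by rwa [mk_out])
  obtain ⟨h, hb⟩ := exists_isNHullBase (ι := κ.out) (by
    rw [mk_out]; exact le_mul_left (aleph0_pos.trans_le (sLTheta_spec n X).1).ne')
  obtain ⟨A, hAκ, hθ, hA⟩ := hb.exists_thetaCl_subset_card_le hn hX
  rw [mk_out] at hAκ hA
  have hA_univ := hb.eq_univ_of_thetaCl_subset hn (by rwa [mk_out]) hθ (by rwa [mk_out])
  rwa [← mk_univ, ← hA_univ]
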